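/- Let P = {0 = x₁ < x₂ < ⋯ < xₙ = 1} be a set of parameter values, C : [0,1] → ℝ² a 1-Lipschitz curve, ε > 0, and let x_min ∈ P minimize ‖C(x_i)‖. If P is a proof set, then for every 1-Lipschitz curve C' : [0,1] → ℝ² with C'(x_i) = C(x_i) for all i, we have ‖C'(x_min)‖ ≤ min_{x∈[0,1]} ‖C'(x)‖ + ε. Conversely, if P is not a proof set, then there exists a 1-Lipschitz C' with C'(x_i) = C(x_i) for all i such that ‖C'(x_min)‖ > min_{x∈[0,1]} ‖C'(x)‖ + ε. -/

import Mathlib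

/-!
For `t ∈ [xᵢ, xᵢ₊₁]`, any 1-Lipschitz `C'` agreeing with `C` at the nodes satisfies
`‖C xᵢ - C' t‖ + ‖C xᵢ₊₁ - C' t‖ ≤ xᵢ₊₁ - xᵢ`, i.e. `C' t` lies in the ellipse whose smallest norm
is `closestPossible C xᵢ xᵢ₊₁`; on a proof set this bounds `‖C' t‖` below by `‖C x_min‖ - ε`.
Conversely, if some ellipse contains a point `p` with `‖p‖ < ‖C x_min‖ - ε`, the unit-speed detour
`C xᵢ → p → C xᵢ₊₁` fits in the time `xᵢ₊₁ - xᵢ`, and splicing it into `C` on `(xᵢ, xᵢ₊₁)` gives a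
1-Lipschitz curve through the nodes whose minimum norm is below `‖C x_min‖ - ε`.
-/

noncomputable def closestPossible (C : ℝ → EuclideanSpace ℝ (Fin 2)) (a b : ℝ) : ℝ :=
  sInf ((fun p => ‖p‖) '' {p : EuclideanSpace ℝ (Fin 2) | ‖C a - p‖ + ‖C b - p‖ ≤ b - a})

open Set NormedSpace

theorem Fin.exists_castSucc_le_le_succ {α : Type*} [LinearOrder α] {n : ℕ} (hn : n ≠ 0)
    (x : Fin (n + 1) → α) {t : α} (h₀ : x 0 ≤ t) (h₁ : t ≤ x (Fin.last n)) :
    ∃ i : Fin n, x i.castSucc ≤ t ∧ t ≤ x i.succ := by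
  induction n with
  | zero => exact absurd rfl hn
  | succ k ih =>
    by_cases h : k ≠ 0 ∧ t ≤ x (Fin.last k).castSucc
    · obtain ⟨i, hi⟩ := ih h.1 (x ∘ Fin.castSucc) h₀ h.2
      exact ⟨i.castSucc, hi⟩
    · refine ⟨Fin.last k, ?_, h₁⟩
      rcases not_and_or.1 h with hk | hk
      · obtain rfl := not_not.1 hk
        exact h₀
      · exact (not_le.1 hk).le

theorem Monotone.apply_mem_Icc {α : Type*} [Preorder α] {n : ℕ} {x : Fin (n + 1) → α}
    (hx : Monotone x) (i : Fin (n + 1)) : x i ∈ Icc (x 0) (x (Fin.last n)) :=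
  ⟨hx (Fin.zero_le i), hx (Fin.le_last i)⟩

theorem abs_min_sub_min_add_abs_max_sub_max_le {c d : ℝ} (hcd : c ≤ d) (s t : ℝ) :
    |min s c - min t c| + |max s d - max t d| ≤ |s - t| := by
  grind

theorem NormedSpace.norm_normalize_le_one {V : Type*} [NormedAddCommGroup V] [NormedSpace ℝ V]
    (v : V) : ‖normalize v‖ ≤ 1 := by
  rcases eq_or_ne v 0 with rfl | hv
  · simp
  · exact (norm_normalize hv).le

section Lipschitz

variable {E : Type*}

theorem LipschitzOnWith.congr [PseudoEMetricSpace E] {K : NNReal} {f g : ℝ → E} {s : Set ℝ}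
    (hf : LipschitzOnWith K f s) (h : EqOn f g s) : LipschitzOnWith K g s :=
  fun x hx y hy => by rw [← h hx, ← h hy]; exact hf hx hy

theorem LipschitzOnWith.Icc_union_Icc [PseudoMetricSpace E] {K : NNReal} {f : ℝ → E}
    {l a r : ℝ} (h₁ : LipschitzOnWith K f (Icc l a)) (h₂ : LipschitzOnWith K f (Icc a r)) :
    LipschitzOnWith K f (Icc l r) := by
  refine LipschitzOnWith.of_dist_le_mul fun s hs t ht => ?_
  wlog hst : s ≤ t generalizing s t
  · rw [dist_comm, dist_comm s]
    exact this t ht s hs (le_of_not_ge hst)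
  rcases le_total t a with hta | hat
  · exact h₁.dist_le_mul s ⟨hs.1, hst.trans hta⟩ t ⟨ht.1, hta⟩
  rcases le_total a s with has | hsa
  · exact h₂.dist_le_mul s ⟨has, hs.2⟩ t ⟨hat, ht.2⟩
  have ha₁ : a ∈ Icc l a := ⟨hs.1.trans hsa, le_rfl⟩
  have ha₂ : a ∈ Icc a r := ⟨le_rfl, hat.trans ht.2⟩
  calc dist (f s) (f t) ≤ dist (f s) (f a) + dist (f a) (f t) := dist_triangle _ _ _
    _ ≤ K * dist s a + K * dist a t :=
        add_le_add (h₁.dist_le_mul s ⟨hs.1, hsa⟩ a ha₁) (h₂.dist_le_mul a ha₂ t ⟨hat, ht.2⟩)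
    _ = K * dist s t := by
        simp only [Real.dist_eq, abs_of_nonpos (sub_nonpos.2 hsa), abs_of_nonpos (sub_nonpos.2 hat),
          abs_of_nonpos (sub_nonpos.2 hst)]
        ring

theorem Set.piecewise_Ioo_eqOn_Icc {f g : ℝ → E} {a b : ℝ} (ha : g a = f a) (hb : g b = f b) :
    EqOn ((Ioo a b).piecewise g f) g (Icc a b) := by
  intro t ht
  by_cases h : t ∈ Ioo a b
  · exact piecewise_eq_of_mem _ _ _ h
  · rw [piecewise_eq_of_notMem _ _ _ h]
    rcases eq_endpoints_or_mem_Ioo_of_mem_Icc ht with rfl | rfl | h'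
    exacts [ha.symm, hb.symm, absurd h' h]

theorem LipschitzOnWith.piecewise_Ioo [PseudoMetricSpace E] {K : NNReal} {f g : ℝ → E}
    {l a b r : ℝ} (hf : LipschitzOnWith K f (Icc l r)) (hg : LipschitzOnWith K g (Icc a b))
    (ha : g a = f a) (hb : g b = f b) (hla : l ≤ a) (hab : a ≤ b) (hbr : b ≤ r) :
    LipschitzOnWith K ((Ioo a b).piecewise g f) (Icc l r) := by
  have hleft : LipschitzOnWith K ((Ioo a b).piecewise g f) (Icc l a) :=
    (hf.mono (Icc_subset_Icc_right (hab.trans hbr))).congr fun t ht =>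
      (piecewise_eq_of_notMem _ _ _ fun h => not_lt.2 ht.2 h.1).symm
  have hright : LipschitzOnWith K ((Ioo a b).piecewise g f) (Icc b r) :=
    (hf.mono (Icc_subset_Icc_left (hla.trans hab))).congr fun t ht =>
      (piecewise_eq_of_notMem _ _ _ fun h => not_lt.2 ht.1 h.2).symm
  exact (hleft.Icc_union_Icc (hg.congr (piecewise_Ioo_eqOn_Icc ha hb).symm)).Icc_union_Icc hright

end Lipschitz

theorem exists_lipschitzWith_one_path_through {V : Type*} [NormedAddCommGroup V] [NormedSpace ℝ V]
    {q₁ p q₂ : V} {a b : ℝ} (h : ‖q₁ - p‖ + ‖q₂ - p‖ ≤ b - a) :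
    ∃ γ : ℝ → V, LipschitzWith 1 γ ∧ γ a = q₁ ∧ γ b = q₂ ∧ ∃ c ∈ Icc a b, γ c = p := by
  set c := a + ‖q₁ - p‖
  set d := b - ‖q₂ - p‖
  have hac : a ≤ c := le_add_of_nonneg_right (norm_nonneg _)
  have hcd : c ≤ d := by linarith
  have hdb : d ≤ b := sub_le_self _ (norm_nonneg _)
  have hc : c - a = ‖p - q₁‖ := by rw [norm_sub_rev]; ring
  have hd : b - d = ‖q₂ - p‖ := by ring
  -- unit speed from `q₁` to `p` on `[a, c]`, rest on `[c, d]`, then unit speed to `q₂` on `[d, b]`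
  refine ⟨fun t => q₁ + (min t c - a) • normalize (p - q₁) + (max t d - d) • normalize (q₂ - p),
    LipschitzWith.mk_one fun s t => ?_, ?_, ?_, c, ⟨hac, hcd.trans hdb⟩, ?_⟩
  · have hsmul (r : ℝ) (v : V) : ‖r • normalize v‖ ≤ |r| := by
      rw [norm_smul, Real.norm_eq_abs]
      exact mul_le_of_le_one_right (abs_nonneg r) (norm_normalize_le_one v)
    calc _ = ‖(min s c - min t c) • normalize (p - q₁)
            + (max s d - max t d) • normalize (q₂ - p)‖ := by
          rw [dist_eq_norm]; congr 1; module
      _ ≤ |min s c - min t c| + |max s d - max t d| :=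
          (norm_add_le _ _).trans (add_le_add (hsmul _ _) (hsmul _ _))
      _ ≤ dist s t := Real.dist_eq s t ▸ abs_min_sub_min_add_abs_max_sub_max_le hcd s t
  · simp [min_eq_left hac, max_eq_right (hac.trans hcd)]
  · simp only [min_eq_right (hcd.trans hdb), max_eq_left hdb, hc, hd, norm_smul_normalize]
    abel
  · simp only [min_self, max_eq_right hcd, hc, sub_self, zero_smul, add_zero, norm_smul_normalize]
    abel

theorem lipschitzOnWith_one_iff_norm_sub_le {V : Type*} [SeminormedAddCommGroup V] {f : ℝ → V}
    {s : Set ℝ} : LipschitzOnWith 1 f s ↔ ∀ a ∈ s, ∀ b ∈ s, ‖f a - f b‖ ≤ |a - b| := by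
  simp [lipschitzOnWith_iff_dist_le_mul, dist_eq_norm]

theorem LipschitzOnWith.norm_sub_add_norm_sub_le {V : Type*} [SeminormedAddCommGroup V]
    {f : ℝ → V} {s : Set ℝ} (hf : LipschitzOnWith 1 f s) {a t b : ℝ} (ha : a ∈ s) (ht : t ∈ s)
    (hb : b ∈ s) (hat : a ≤ t) (htb : t ≤ b) : ‖f a - f t‖ + ‖f b - f t‖ ≤ b - a := by
  have h₁ := lipschitzOnWith_one_iff_norm_sub_le.1 hf a ha t ht
  have h₂ := lipschitzOnWith_one_iff_norm_sub_le.1 hf b hb t ht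
  rw [abs_of_nonpos (sub_nonpos.2 hat)] at h₁
  rw [abs_of_nonneg (sub_nonneg.2 htb)] at h₂
  linarith

section ClosestPossible

variable {C : ℝ → EuclideanSpace ℝ (Fin 2)} {a b : ℝ}

theorem closestPossible_le_norm {p : EuclideanSpace ℝ (Fin 2)}
    (hp : ‖C a - p‖ + ‖C b - p‖ ≤ b - a) : closestPossible C a b ≤ ‖p‖ :=
  csInf_le ⟨0, forall_mem_image.2 fun q _ => norm_nonneg q⟩ ⟨p, hp, rfl⟩

theorem exists_norm_lt_of_closestPossible_lt {r : ℝ} (hab : ‖C b - C a‖ ≤ b - a)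
    (h : closestPossible C a b < r) :
    ∃ p, ‖C a - p‖ + ‖C b - p‖ ≤ b - a ∧ ‖p‖ < r := by
  have hne : ‖C a - C a‖ + ‖C b - C a‖ ≤ b - a := by simpa using hab
  obtain ⟨_, ⟨p, hp, rfl⟩, hpr⟩ := exists_lt_of_csInf_lt (by exact ⟨_, C a, hne, rfl⟩) h
  exact ⟨p, hp, hpr⟩

variable {n : ℕ} {x : Fin (n + 1) → ℝ}

theorem le_norm_of_forall_le_closestPossible (hn : n ≠ 0) (hx : Monotone x)
    {C' : ℝ → EuclideanSpace ℝ (Fin 2)} (hC' : LipschitzOnWith 1 C' (Icc (x 0) (x (Fin.last n))))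
    (hagree : ∀ i, C' (x i) = C (x i)) {r : ℝ}
    (hr : ∀ i : Fin n, r ≤ closestPossible C (x i.castSucc) (x i.succ))
    {t : ℝ} (ht : t ∈ Icc (x 0) (x (Fin.last n))) : r ≤ ‖C' t‖ := by
  obtain ⟨i, hit, hti⟩ := Fin.exists_castSucc_le_le_succ hn x ht.1 ht.2
  refine (hr i).trans (closestPossible_le_norm ?_)
  rw [← hagree, ← hagree]
  exact hC'.norm_sub_add_norm_sub_le (hx.apply_mem_Icc _) ht (hx.apply_mem_Icc _) hit hti

theorem exists_lipschitzOnWith_agree_norm_lt (hx : Monotone x)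
    (hC : LipschitzOnWith 1 C (Icc (x 0) (x (Fin.last n)))) {r : ℝ} {i : Fin n}
    (hi : closestPossible C (x i.castSucc) (x i.succ) < r) :
    ∃ C' : ℝ → EuclideanSpace ℝ (Fin 2), LipschitzOnWith 1 C' (Icc (x 0) (x (Fin.last n))) ∧
      (∀ j, C' (x j) = C (x j)) ∧ ∃ t ∈ Icc (x 0) (x (Fin.last n)), ‖C' t‖ < r := by
  classical
  have ha := hx.apply_mem_Icc i.castSucc
  have hb := hx.apply_mem_Icc i.succ
  have hab : x i.castSucc ≤ x i.succ := hx Fin.castSucc_lt_succ.le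
  obtain ⟨p, hp, hpr⟩ := exists_norm_lt_of_closestPossible_lt
    (by simpa using hC.norm_sub_add_norm_sub_le ha ha hb le_rfl hab) hi
  obtain ⟨γ, hγ, hγa, hγb, c, hc, hγc⟩ := exists_lipschitzWith_one_path_through hp
  refine ⟨(Ioo (x i.castSucc) (x i.succ)).piecewise γ C,
    hC.piecewise_Ioo hγ.lipschitzOnWith hγa hγb ha.1 hab hb.2, fun j => ?_,
    c, ⟨ha.1.trans hc.1, hc.2.trans hb.2⟩, ?_⟩
  · refine piecewise_eq_of_notMem _ _ _ fun hj => ?_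
    rcases le_or_gt j i.castSucc with h | h
    · exact (hx h).not_gt hj.1
    · exact (hx (Fin.castSucc_lt_iff_succ_le.1 h)).not_gt hj.2
  · rwa [piecewise_Ioo_eqOn_Icc hγa hγb hc, hγc]

end ClosestPossible

theorem stmt_9_general (C : ℝ → EuclideanSpace ℝ (Fin 2))
    (hC : ∀ a ∈ Set.Icc (0:ℝ) 1, ∀ b ∈ Set.Icc (0:ℝ) 1, ‖C a - C b‖ ≤ |a - b|)
    (ε : ℝ)
    (n : ℕ) (x : Fin (n + 1) → ℝ) (hmono : StrictMono x)
    (hx0 : x 0 = 0) (hxn : x (Fin.last n) = 1)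
    (m : Fin (n + 1)) :
    -- if P is a proof set, x_min is a valid answer for any agreeing curve
    ((∀ i : Fin n, ‖C (x m)‖ - ε ≤ closestPossible C (x i.castSucc) (x i.succ)) →
      ∀ C' : ℝ → EuclideanSpace ℝ (Fin 2),
        (∀ a ∈ Set.Icc (0:ℝ) 1, ∀ b ∈ Set.Icc (0:ℝ) 1, ‖C' a - C' b‖ ≤ |a - b|) →
        (∀ i : Fin (n + 1), C' (x i) = C (x i)) →
        ‖C' (x m)‖ ≤ sInf ((fun t => ‖C' t‖) '' Set.Icc (0:ℝ) 1) + ε) ∧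
    -- converse: if P is not a proof set, there is an agreeing curve for which it is not
    (¬ (∀ i : Fin n, ‖C (x m)‖ - ε ≤ closestPossible C (x i.castSucc) (x i.succ)) →
      ∃ C' : ℝ → EuclideanSpace ℝ (Fin 2),
        (∀ a ∈ Set.Icc (0:ℝ) 1, ∀ b ∈ Set.Icc (0:ℝ) 1, ‖C' a - C' b‖ ≤ |a - b|) ∧
        (∀ i : Fin (n + 1), C' (x i) = C (x i)) ∧
        ‖C' (x m)‖ > sInf ((fun t => ‖C' t‖) '' Set.Icc (0:ℝ) 1) + ε) := by
  have hn : n ≠ 0 := by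
    rintro rfl
    simp [hx0] at hxn
  have hI : Icc (0 : ℝ) 1 = Icc (x 0) (x (Fin.last n)) := by rw [hx0, hxn]
  simp only [← lipschitzOnWith_one_iff_norm_sub_le, hI] at hC ⊢
  refine ⟨fun hproof C' hC' hagree => ?_, fun hnot => ?_⟩
  · have hlower := le_csInf (⟨_, _, hmono.monotone.apply_mem_Icc 0, rfl⟩ : (_ '' _).Nonempty)
      (forall_mem_image.2 fun t => le_norm_of_forall_le_closestPossible hn hmono.monotone hC'
        hagree hproof)
    rw [hagree m]
    linarith
  · obtain ⟨i, hi⟩ := not_forall.1 hnot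
    obtain ⟨C', hC', hagree, t, ht, htr⟩ :=
      exists_lipschitzOnWith_agree_norm_lt hmono.monotone hC (not_le.1 hi)
    have hupper := csInf_le ⟨0, forall_mem_image.2 fun s _ => norm_nonneg (C' s)⟩ ⟨t, ht, rfl⟩
    refine ⟨C', hC', hagree, ?_⟩
    rw [hagree m]
    linarith

theorem stmt_9 (C : ℝ → EuclideanSpace ℝ (Fin 2))
    (hC : ∀ a ∈ Set.Icc (0:ℝ) 1, ∀ b ∈ Set.Icc (0:ℝ) 1, ‖C a - C b‖ ≤ |a - b|)
    (ε : ℝ) (hε : 0 < ε)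
    (n : ℕ) (x : Fin (n + 1) → ℝ) (hmono : StrictMono x)
    (hx0 : x 0 = 0) (hxn : x (Fin.last n) = 1)
    (m : Fin (n + 1)) (hm : ∀ i : Fin (n + 1), ‖C (x m)‖ ≤ ‖C (x i)‖) :
    -- if P is a proof set, x_min is a valid answer for any agreeing curve
    ((∀ i : Fin n, ‖C (x m)‖ - ε ≤ closestPossible C (x i.castSucc) (x i.succ)) →
      ∀ C' : ℝ → EuclideanSpace ℝ (Fin 2),
        (∀ a ∈ Set.Icc (0:ℝ) 1, ∀ b ∈ Set.Icc (0:ℝ) 1, ‖C' a - C' b‖ ≤ |a - b|) →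
        (∀ i : Fin (n + 1), C' (x i) = C (x i)) →
        ‖C' (x m)‖ ≤ sInf ((fun t => ‖C' t‖) '' Set.Icc (0:ℝ) 1) + ε) ∧
    -- converse: if P is not a proof set, there is an agreeing curve for which it is not
    (¬ (∀ i : Fin n, ‖C (x m)‖ - ε ≤ closestPossible C (x i.castSucc) (x i.succ)) →
      ∃ C' : ℝ → EuclideanSpace ℝ (Fin 2),
        (∀ a ∈ Set.Icc (0:ℝ) 1, ∀ b ∈ Set.Icc (0:ℝ) 1, ‖C' a - C' b‖ ≤ |a - b|) ∧
        (∀ i : Fin (n + 1), C' (x i) = C (x i)) ∧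
        ‖C' (x m)‖ > sInf ((fun t => ‖C' t‖) '' Set.Icc (0:ℝ) 1) + ε) :=
  stmt_9_general C hC ε n x hmono hx0 hxn m
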